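/- arXiv:2007.00969 — 4 statements merged into one kernel-verified Lean document; each statement's English description precedes it below -/
import Mathlib

section
/- The value V^M(μ) of the lower-bound optimisation problem min_{N ≥ 0} Σ_k N^k Δ_ε^k subject to inf_{λ∈Λ} Σ_k N^k d(μ^k, λ^k) ≥ 1 equals the reciprocal of D_ε = sup_{w∈Δ} inf_{λ∈Λ} (Σ_k w^k d(μ^k,λ^k))/(Σ_k w^k Δ_ε^k), provided D_ε ∈ (0,∞). -/
/-- The value of the lower-bound optimisation problem (minimal perturbed regret cost of
an allocation satisfying the information constraint) is the reciprocal of the game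
value `D_ε`, provided `D_ε ∈ (0, ∞)`. -/
theorem lower_bound_value_eq_inv_game_value {K : ℕ} [Nonempty (Fin K)]
    {Λ : Type*} [Nonempty Λ]
    (d : Fin K → Λ → ℝ) (hd : ∀ k l, 0 ≤ d k l)
    (Δ : Fin K → ℝ) (hΔ : ∀ k, 0 < Δ k)
    (hbdd : BddAbove (Set.range (fun w : Fin K → ℝ =>
      ⨅ l : Λ, (∑ k, w k * d k l) / (∑ k, w k * Δ k))))
    (hD : 0 < ⨆ w ∈ stdSimplex ℝ (Fin K), ⨅ l : Λ,
      (∑ k, w k * d k l) / (∑ k, w k * Δ k)) :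
    sInf {r : ℝ | ∃ N : Fin K → ℝ, (∀ k, 0 ≤ N k) ∧
        (∀ l : Λ, 1 ≤ ∑ k, N k * d k l) ∧ r = ∑ k, N k * Δ k} =
      1 / ⨆ w ∈ stdSimplex ℝ (Fin K), ⨅ l : Λ,
        (∑ k, w k * d k l) / (∑ k, w k * Δ k) := by
  classical
  set g : (Fin K → ℝ) → ℝ := fun w => ⨅ l : Λ, (∑ k, w k * d k l) / (∑ k, w k * Δ k)
    with hg
  set D : ℝ := ⨆ w ∈ stdSimplex ℝ (Fin K), g w with hDdef
  set S : Set ℝ := {r : ℝ | ∃ N : Fin K → ℝ, (∀ k, 0 ≤ N k) ∧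
      (∀ l : Λ, 1 ≤ ∑ k, N k * d k l) ∧ r = ∑ k, N k * Δ k} with hSdef
  obtain ⟨B, hB⟩ := hbdd
  have hbdd' : BddAbove (Set.range (fun w : Fin K → ℝ =>
      ⨆ _ : w ∈ stdSimplex ℝ (Fin K), g w)) := by
    refine ⟨max B 0, ?_⟩
    rintro x ⟨w, rfl⟩
    dsimp only
    by_cases hw : w ∈ stdSimplex ℝ (Fin K)
    · rw [ciSup_pos hw]
      exact le_max_of_le_left (hB ⟨w, rfl⟩)
    · haveI : IsEmpty (w ∈ stdSimplex ℝ (Fin K)) := isEmpty_Prop.2 hw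
      rw [Real.iSup_of_isEmpty]
      exact le_max_right _ _
  -- every feasible cost is ≥ 1/D
  have hlb : ∀ r ∈ S, 1 / D ≤ r := by
    rintro r ⟨N, hN0, hNc, rfl⟩
    set s : ℝ := ∑ k, N k with hs
    have hs0 : 0 < s := by
      rcases lt_or_eq_of_le (Finset.sum_nonneg (fun k _ => hN0 k)) with h | h
      · exact h
      · exfalso
        have hz : ∀ k ∈ Finset.univ, N k = 0 :=
          (Finset.sum_eq_zero_iff_of_nonneg (fun k _ => hN0 k)).1 h.symm
        obtain l := Classical.arbitrary Λ
        have := hNc l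
        simp only [hz _ (Finset.mem_univ _), zero_mul, Finset.sum_const_zero] at this
        linarith
    set c : ℝ := ∑ k, N k * Δ k with hc
    have hc0 : 0 < c := by
      rcases lt_or_eq_of_le (Finset.sum_nonneg (fun k _ => mul_nonneg (hN0 k) (hΔ k).le))
        with h | h
      · exact h
      · exfalso
        have hz : ∀ k ∈ Finset.univ, N k * Δ k = 0 :=
          (Finset.sum_eq_zero_iff_of_nonneg (fun k _ => mul_nonneg (hN0 k) (hΔ k).le)).1 h.symm
        have : s = 0 := by
          rw [hs]
          refine Finset.sum_eq_zero fun k _ => ?_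
          rcases mul_eq_zero.1 (hz k (Finset.mem_univ k)) with h' | h'
          · exact h'
          · exact absurd h' (hΔ k).ne'
        linarith
    set w : Fin K → ℝ := fun k => N k / s with hw
    have hwmem : w ∈ stdSimplex ℝ (Fin K) := by
      constructor
      · intro k; exact div_nonneg (hN0 k) hs0.le
      · rw [hw]; dsimp only; rw [← Finset.sum_div, ← hs, div_self hs0.ne']
    have hsum : ∀ f : Fin K → ℝ, (∑ k, w k * f k) = (∑ k, N k * f k) / s := by
      intro f
      rw [Finset.sum_div]
      exact Finset.sum_congr rfl fun k _ => by rw [hw]; ring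
    have hgw : 1 / c ≤ g w := by
      refine le_ciInf fun l => ?_
      rw [hsum (fun k => d k l), hsum Δ, ← hc]
      have heq : (∑ k, N k * d k l) / s / (c / s) = (∑ k, N k * d k l) / c := by
        field_simp
      rw [heq, div_le_div_iff₀ hc0 hc0]
      nlinarith [hNc l, hc0]
    have hgwD : g w ≤ D := by
      have h1 : (⨆ _ : w ∈ stdSimplex ℝ (Fin K), g w) ≤ D := le_ciSup hbdd' w
      rwa [ciSup_pos hwmem] at h1
    have h1cD : 1 / c ≤ D := le_trans hgw hgwD
    rw [div_le_iff₀ hD]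
    rw [div_le_iff₀ hc0] at h1cD
    nlinarith
  -- for every c > 1/D there is a feasible cost < c
  have hub : ∀ c : ℝ, 1 / D < c → ∃ r ∈ S, r < c := by
    intro c hcD
    have hc0 : 0 < c := lt_trans (by positivity) hcD
    have h1c : 1 / c < D := by
      rw [div_lt_iff₀ hc0]
      rw [div_lt_iff₀ hD] at hcD
      nlinarith
    obtain ⟨w, hw⟩ := exists_lt_of_lt_ciSup (h1c :
      1 / c < ⨆ w : Fin K → ℝ, ⨆ _ : w ∈ stdSimplex ℝ (Fin K), g w)
    have hwmem : w ∈ stdSimplex ℝ (Fin K) := by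
      by_contra hmem
      haveI : IsEmpty (w ∈ stdSimplex ℝ (Fin K)) := isEmpty_Prop.2 hmem
      rw [Real.iSup_of_isEmpty] at hw
      exact absurd hw (not_lt.2 (by positivity))
    rw [ciSup_pos hwmem] at hw
    have hgw0 : 0 < g w := lt_trans (by positivity) hw
    set t : ℝ := ∑ k, w k * Δ k with ht
    have ht0 : 0 < t := by
      rcases lt_or_eq_of_le (Finset.sum_nonneg (fun k _ => mul_nonneg (hwmem.1 k) (hΔ k).le))
        with h | h
      · exact h
      · exfalso
        have hz : ∀ k ∈ Finset.univ, w k * Δ k = 0 :=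
          (Finset.sum_eq_zero_iff_of_nonneg (fun k _ => mul_nonneg (hwmem.1 k) (hΔ k).le)).1
            h.symm
        have : (∑ k, w k) = 0 := by
          refine Finset.sum_eq_zero fun k _ => ?_
          rcases mul_eq_zero.1 (hz k (Finset.mem_univ k)) with h' | h'
          · exact h'
          · exact absurd h' (hΔ k).ne'
        rw [hwmem.2] at this
        linarith
    set a : ℝ := g w * t with ha
    have ha0 : 0 < a := mul_pos hgw0 ht0
    have hbb : BddBelow (Set.range fun l : Λ => (∑ k, w k * d k l) / (∑ k, w k * Δ k)) := by
      refine ⟨0, ?_⟩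
      rintro x ⟨l', rfl⟩
      exact div_nonneg
        (Finset.sum_nonneg fun k _ => mul_nonneg (hwmem.1 k) (hd k l')) ht0.le
    refine ⟨1 / g w, ⟨fun k => w k / a, fun k => div_nonneg (hwmem.1 k) ha0.le, ?_, ?_⟩, ?_⟩
    · intro l
      dsimp only
      have hsum : (∑ k, (w k / a) * d k l) = (∑ k, w k * d k l) / a := by
        rw [Finset.sum_div]; exact Finset.sum_congr rfl fun k _ => by ring
      rw [hsum, le_div_iff₀ ha0, one_mul, ha]
      have h1 : g w ≤ (∑ k, w k * d k l) / t := ciInf_le hbb l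
      rw [le_div_iff₀ ht0] at h1
      linarith
    · dsimp only
      have hsum : (∑ k, (w k / a) * Δ k) = t / a := by
        rw [ht, Finset.sum_div]; exact Finset.sum_congr rfl fun k _ => by ring
      rw [hsum, ha, mul_comm, ← div_div, div_self ht0.ne']
    · rw [div_lt_iff₀ hgw0]
      rw [div_lt_iff₀ hc0] at hw
      nlinarith
  have hne : S.Nonempty := by
    obtain ⟨r, hr, _⟩ := hub (1 / D + 1) (by linarith)
    exact ⟨r, hr⟩
  refine le_antisymm ?_ (le_csInf hne hlb)
  refine le_of_forall_gt_imp_ge_of_dense fun c hc => ?_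
  obtain ⟨r, hrS, hrc⟩ := hub c hc
  exact le_trans (csInf_le ⟨1 / D, hlb⟩ hrS) hrc.le
end

section
/- Tracking lemma: let (w_s)_{s≥1} be vectors in the K-simplex and define pulls by k_t ∈ argmin_{k∈[K]} (N_{t−1}^k − Σ_{s=1}^t w_s^k) with N_t^k = Σ_{s≤t} 1{k_s = k} and N_0 = 0. Then for all t ≥ 0 and all k ∈ [K], −ln(K) ≤ N_t^k − Σ_{s=1}^t w_s^k ≤ 1. -/
/-!
Write `G_t = Σ_{s<t} (w_s - e_{k_s})` for the surplus of the target over the pulls, so that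
`G_{t+1} = G_t + w_t - e_{k_t}` with `k_t` a maximiser of `G_t + w_t`, and `Σ_i G_t^i = 0`.
The invariant is that every set `S` of `m` arms has total surplus at most `m log (K / m)`.
It is preserved: if `k_t ∈ S` the sum only drops, and if `k_t ∉ S` then `k_t` carries at least the
average of `G_t + w_t` over `S ∪ {k_t}`, so the `m` arms of `S` share at most `m / (m + 1)` of the
bound `(m + 1) log (K / (m + 1)) + 1` for `S ∪ {k_t}`, and `1 / (m + 1) ≤ log ((m + 1) / m)`.
Taking `S = {i}` gives `G_t^i ≤ log K`; taking `S` the other `K - 1` arms and using `Σ_i G_t^i = 0`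
gives `G_t^i ≥ -(K - 1) log (K / (K - 1)) ≥ -1`.
-/

open Finset Real

namespace Real

theorem inv_add_one_le_log_add_one_sub_log {m : ℝ} (hm : 0 < m) :
    (m + 1)⁻¹ ≤ log (m + 1) - log m := by
  have h := one_sub_inv_le_log_of_pos (div_pos (by linarith : 0 < m + 1) hm)
  rw [log_div (by linarith) hm.ne', inv_div] at h
  calc (m + 1)⁻¹ = 1 - m / (m + 1) := by field_simp; ring
    _ ≤ _ := h

theorem mul_log_add_one_sub_log_le_one {m : ℝ} (hm : 0 ≤ m) :
    m * (log (m + 1) - log m) ≤ 1 := by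
  rcases hm.eq_or_lt with rfl | hm
  · simp
  have h := log_le_sub_one_of_pos (div_pos (by linarith : 0 < m + 1) hm)
  rw [log_div (by linarith) hm.ne'] at h
  calc m * (log (m + 1) - log m) ≤ m * ((m + 1) / m - 1) := by gcongr
    _ = 1 := by field_simp; ring

end Real

theorem Finset.card_add_one_mul_sum_le_card_mul_sum_insert {ι R : Type*} [DecidableEq ι]
    [Field R] [LinearOrder R] [IsStrictOrderedRing R] {x : ι → R} {a : ι} {S : Finset ι}
    (haS : a ∉ S) (hx : ∀ j ∈ S, x j ≤ x a) :
    (#S + 1) * ∑ j ∈ S, x j ≤ #S * ∑ j ∈ insert a S, x j := by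
  have h := sum_le_card_nsmul S x (x a) hx
  rw [nsmul_eq_mul] at h
  rw [sum_insert haS]
  linear_combination h

theorem stdSimplex.sum_le_one {ι : Type*} [Fintype ι] {w : ι → ℝ} (hw : w ∈ stdSimplex ℝ ι)
    (S : Finset ι) : ∑ j ∈ S, w j ≤ 1 :=
  hw.2 ▸ sum_le_univ_sum_of_nonneg hw.1

section SubsetSums

variable {ι : Type*} [Fintype ι]

def SubsetSumsBounded (G : ι → ℝ) : Prop :=
  ∀ S : Finset ι, ∑ j ∈ S, G j ≤ #S * (log (Fintype.card ι) - log #S)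

theorem subsetSumsBounded_zero : SubsetSumsBounded (0 : ι → ℝ) := by
  intro S
  simp only [Pi.zero_apply, sum_const_zero]
  rcases S.eq_empty_or_nonempty with rfl | hS
  · simp
  have : log #S ≤ log (Fintype.card ι) :=
    log_le_log (by simpa using hS.card_pos) (by exact_mod_cast card_le_univ S)
  exact mul_nonneg (by positivity) (by linarith)

theorem SubsetSumsBounded.add_sub_single [DecidableEq ι] {G w : ι → ℝ} {a : ι}
    (hG : SubsetSumsBounded G) (hw : w ∈ stdSimplex ℝ ι) (ha : ∀ j, G j + w j ≤ G a + w a) :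
    SubsetSumsBounded (G + w - Pi.single a 1) := by
  intro S
  have hsum : ∑ j ∈ S, (G + w - Pi.single a 1 : ι → ℝ) j
      = ∑ j ∈ S, (G j + w j) - if a ∈ S then 1 else 0 := by
    simp only [Pi.sub_apply, Pi.add_apply, sum_sub_distrib, Pi.single_apply, sum_ite_eq']
  by_cases haS : a ∈ S
  · rw [hsum, if_pos haS, sum_add_distrib]
    linarith [hG S, stdSimplex.sum_le_one hw S]
  rcases S.eq_empty_or_nonempty with rfl | hS
  · simp
  rw [hsum, if_neg haS, sub_zero]
  set m := (#S : ℝ)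
  set L := log (Fintype.card ι)
  have hm : 0 < m := by simpa [m] using hS.card_pos
  have hinsert : ∑ j ∈ insert a S, (G j + w j) ≤ (m + 1) * (L - log (m + 1)) + 1 := by
    have h := hG (insert a S)
    rw [card_insert_of_notMem haS, Nat.cast_succ] at h
    rw [sum_add_distrib]
    linarith [stdSimplex.sum_le_one hw (insert a S)]
  have havg := card_add_one_mul_sum_le_card_mul_sum_insert haS (fun j _ => ha j)
  have hlog := inv_add_one_le_log_add_one_sub_log hm
  refine le_of_mul_le_mul_left ?_ (by linarith : 0 < m + 1)
  calc (m + 1) * ∑ j ∈ S, (G j + w j)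
      ≤ m * ((m + 1) * (L - log (m + 1)) + 1) := havg.trans (by gcongr)
    _ = (m + 1) * (m * (L - log (m + 1) + (m + 1)⁻¹)) := by field_simp
    _ ≤ (m + 1) * (m * (L - log m)) := by gcongr; linarith

theorem SubsetSumsBounded.le_log_card {G : ι → ℝ} (hG : SubsetSumsBounded G) (i : ι) :
    G i ≤ log (Fintype.card ι) := by
  simpa using hG {i}

theorem SubsetSumsBounded.neg_one_le [DecidableEq ι] {G : ι → ℝ} (hG : SubsetSumsBounded G)
    (hsum : ∑ j, G j = 0) (i : ι) : -1 ≤ G i := by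
  have h := hG (univ.erase i)
  rw [← add_sum_erase _ _ (mem_univ i)] at hsum
  have hcard : (Fintype.card ι : ℝ) = #(univ.erase i) + 1 := by
    norm_cast
    rw [card_erase_add_one (mem_univ i), card_univ]
  rw [hcard] at h
  linarith [mul_log_add_one_sub_log_le_one (Nat.cast_nonneg (α := ℝ) #(univ.erase i))]

theorem subsetSumsBounded_of_step [DecidableEq ι] {G w : ℕ → ι → ℝ} {a : ℕ → ι} (h0 : G 0 = 0)
    (hstep : ∀ t, G (t + 1) = G t + w t - Pi.single (a t) 1) (hw : ∀ t, w t ∈ stdSimplex ℝ ι)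
    (ha : ∀ t j, G t j + w t j ≤ G t (a t) + w t (a t)) (t : ℕ) : SubsetSumsBounded (G t) := by
  induction t with
  | zero => exact h0 ▸ subsetSumsBounded_zero
  | succ t ih => exact hstep t ▸ ih.add_sub_single (hw t) (ha t)

end SubsetSums

theorem tracking_lemma_general {K : ℕ}
    (w : ℕ → Fin K → ℝ) (hw : ∀ s, w s ∈ stdSimplex ℝ (Fin K))
    (k : ℕ → Fin K)
    (N : ℕ → Fin K → ℕ)
    (hN : ∀ t i, N t i = ((Finset.range t).filter (fun s => k s = i)).card)
    (hsel : ∀ t, ∀ j : Fin K,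
      (N t (k t) : ℝ) - ∑ s ∈ Finset.range (t + 1), w s (k t) ≤
        (N t j : ℝ) - ∑ s ∈ Finset.range (t + 1), w s j) :
    ∀ t, ∀ i : Fin K,
      -Real.log K ≤ (N t i : ℝ) - ∑ s ∈ Finset.range t, w s i ∧
      (N t i : ℝ) - ∑ s ∈ Finset.range t, w s i ≤ 1 := by
  set G : ℕ → Fin K → ℝ := fun t => ∑ s ∈ range t, (w s - Pi.single (k s) 1)
  have hGN : ∀ t i, G t i = ∑ s ∈ range t, w s i - N t i := by
    intro t i
    simp [G, hN, Finset.sum_apply, Pi.single_apply, eq_comm]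
  have hsum : ∀ t, ∑ i, G t i = 0 := by
    intro t
    simp [G, Finset.sum_apply, sum_comm (s := univ), (hw _).2]
  have hmax : ∀ t j, G t j + w t j ≤ G t (k t) + w t (k t) := by
    intro t j
    have h := hsel t j
    rw [sum_range_succ, sum_range_succ] at h
    rw [hGN, hGN]
    linarith
  have hbound := subsetSumsBounded_of_step (by simp [G])
    (fun t => by simp only [G, sum_range_succ, add_sub_assoc]) hw hmax
  intro t i
  have hup := (hbound t).le_log_card i
  have hlow := (hbound t).neg_one_le (hsum t) i
  rw [hGN, Fintype.card_fin] at hup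
  rw [hGN] at hlow
  constructor <;> linarith

/-- Tracking lemma: pulling at each round an arm minimising the deficit
`N_{t-1}^k − Σ_{s≤t} w_s^k` keeps every deficit `N_t^k − Σ_{s≤t} w_s^k`
in the interval `[−ln K, 1]`. (Rounds are indexed from `0` here, so round `t`
of the statement corresponds to `Finset.range t`.) -/
theorem tracking_lemma {K : ℕ} (hK : 0 < K)
    (w : ℕ → Fin K → ℝ) (hw : ∀ s, w s ∈ stdSimplex ℝ (Fin K))
    (k : ℕ → Fin K)
    (N : ℕ → Fin K → ℕ)
    (hN : ∀ t i, N t i = ((Finset.range t).filter (fun s => k s = i)).card)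
    (hsel : ∀ t, ∀ j : Fin K,
      (N t (k t) : ℝ) - ∑ s ∈ Finset.range (t + 1), w s (k t) ≤
        (N t j : ℝ) - ∑ s ∈ Finset.range (t + 1), w s j) :
    ∀ t, ∀ i : Fin K,
      -Real.log K ≤ (N t i : ℝ) - ∑ s ∈ Finset.range t, w s i ∧
      (N t i : ℝ) - ∑ s ∈ Finset.range t, w s i ≤ 1 :=
  tracking_lemma_general w hw k N hN hsel
end

section
/- Under the tracking rule k_t ∈ argmin_k (N_{t−1}^k − Σ_{s=1}^t w_s^k), for all t and all k ∈ [K], the deficit satisfies Σ_{s=1}^t w_s^k − N_t^k ≤ Σ_{j=2}^{K} 1/j ≤ ln K. -/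
/-- The partial harmonic sum `Σ_{j=2}^K 1/j` is at most `ln K`. -/
lemma harmonic_tail_le_log : ∀ K : ℕ, ∑ j ∈ Finset.Icc 2 K, (1 : ℝ) / j ≤ Real.log K := by
  intro K
  induction K with
  | zero => simp
  | succ K ih =>
    rcases Nat.eq_zero_or_pos K with h0 | hKpos
    · subst h0; simp
    · rw [Finset.sum_Icc_succ_top (by omega : 2 ≤ K + 1)]
      have hlog : Real.log ((K : ℝ) / (K + 1)) ≤ (K : ℝ) / (K + 1) - 1 :=
        Real.log_le_sub_one_of_pos (by positivity)
      have hK0 : (K : ℝ) ≠ 0 := by positivity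
      have hK1 : (K : ℝ) + 1 ≠ 0 := by positivity
      rw [Real.log_div hK0 hK1] at hlog
      have h1 : (K : ℝ) / (K + 1) - 1 = -(1 / (K + 1)) := by field_simp; ring
      have h2 : (1 : ℝ) / (K + 1) ≤ Real.log (K + 1) - Real.log K := by
        rw [h1] at hlog; linarith
      push_cast
      linarith

/-- Subset invariant for the tracking rule: for every time `t` and every subset `S`
of arms, the total undershoot over `S` is at most `|S| · Σ_{j=|S|+1}^K 1/j`. -/
lemma tracking_subset_invariant {K : ℕ}
    (w : ℕ → Fin K → ℝ) (hw : ∀ s, w s ∈ stdSimplex ℝ (Fin K))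
    (k : ℕ → Fin K)
    (N : ℕ → Fin K → ℕ)
    (hN : ∀ t i, N t i = ((Finset.range t).filter (fun s => k s = i)).card)
    (hsel : ∀ t, ∀ j : Fin K,
      (N t (k t) : ℝ) - ∑ s ∈ Finset.range (t + 1), w s (k t) ≤
        (N t j : ℝ) - ∑ s ∈ Finset.range (t + 1), w s j) :
    ∀ t : ℕ, ∀ S : Finset (Fin K),
      ∑ i ∈ S, ((∑ s ∈ Finset.range t, w s i) - (N t i : ℝ)) ≤
        (S.card : ℝ) * ∑ j ∈ Finset.Icc (S.card + 1) K, (1 : ℝ) / j := by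
  intro t
  induction t with
  | zero =>
    intro S
    have h0 : ∀ i, N 0 i = 0 := by intro i; simp [hN]
    simp only [Finset.range_zero, Finset.sum_empty, h0, Nat.cast_zero, sub_zero]
    have : (0 : ℝ) ≤ (S.card : ℝ) * ∑ j ∈ Finset.Icc (S.card + 1) K, (1 : ℝ) / j := by
      apply mul_nonneg (by positivity)
      apply Finset.sum_nonneg; intro j _; positivity
    simpa using this
  | succ t ih =>
    intro S
    set a := k t with ha
    -- counting step
    have hNsucc : ∀ i, (N (t + 1) i : ℝ) = (N t i : ℝ) + (if a = i then 1 else 0) := by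
      intro i
      rw [hN, hN, Finset.range_add_one, Finset.filter_insert]
      by_cases h : a = i
      · rw [if_pos h, Finset.card_insert_of_notMem (by simp)]
        push_cast; rw [if_pos h]
      · rw [if_neg h, if_neg h]; ring
    -- G i = lookahead deficit
    set G : Fin K → ℝ := fun i => ((∑ s ∈ Finset.range t, w s i) - (N t i : ℝ)) + w t i with hG
    have hLHS : ∑ i ∈ S, ((∑ s ∈ Finset.range (t + 1), w s i) - (N (t + 1) i : ℝ)) =
        (∑ i ∈ S, G i) - (if a ∈ S then 1 else 0) := by
      rw [← Finset.sum_ite_eq S a (fun _ => (1 : ℝ)), ← Finset.sum_sub_distrib]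
      apply Finset.sum_congr rfl
      intro i _
      rw [Finset.sum_range_succ, hNsucc i]
      simp only [hG]; ring
    rw [hLHS]
    have hwnn := fun s => (hw s).1
    have hwsum := fun s => (hw s).2
    have hSw : ∀ (T : Finset (Fin K)), ∑ i ∈ T, w t i ≤ 1 := by
      intro T
      calc ∑ i ∈ T, w t i ≤ ∑ i ∈ Finset.univ, w t i :=
            Finset.sum_le_sum_of_subset_of_nonneg (Finset.subset_univ T)
              (fun i _ _ => hwnn t i)
        _ = 1 := hwsum t
    have hGsum : ∀ (T : Finset (Fin K)),
        ∑ i ∈ T, G i ≤ (∑ i ∈ T, ((∑ s ∈ Finset.range t, w s i) - (N t i : ℝ))) + 1 := by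
      intro T
      have : ∑ i ∈ T, G i =
          (∑ i ∈ T, ((∑ s ∈ Finset.range t, w s i) - (N t i : ℝ))) + ∑ i ∈ T, w t i := by
        simp only [hG]; rw [← Finset.sum_add_distrib]
      rw [this]
      linarith [hSw T]
    by_cases haS : a ∈ S
    · rw [if_pos haS]
      have := hGsum S
      have := ih S
      linarith
    · rw [if_neg haS]
      set m := S.card with hm
      have hmK : m + 1 ≤ K := by
        have : (insert a S).card ≤ K := by
          simpa using Finset.card_le_card (Finset.subset_univ (insert a S))
        rwa [Finset.card_insert_of_notMem haS] at this
      -- a is the argmax of G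
      have hGmax : ∀ i, G i ≤ G a := by
        intro i
        have h := hsel t i
        rw [Finset.sum_range_succ, Finset.sum_range_succ] at h
        simp only [hG, ← ha]
        linarith
      set S' := insert a S with hS'
      have hcard' : S'.card = m + 1 := Finset.card_insert_of_notMem haS
      -- sum over S' bound
      have hIcc : Finset.Icc (m + 1) K = insert (m + 1) (Finset.Icc (m + 2) K) := by
        ext x; simp only [Finset.mem_Icc, Finset.mem_insert]; omega
      have h1 : ∑ i ∈ S', G i ≤ ((m : ℝ) + 1) * ∑ j ∈ Finset.Icc (m + 1) K, (1 : ℝ) / j := by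
        have hih := ih S'
        rw [hcard'] at hih
        have h2 : ((m : ℝ) + 1) * ∑ j ∈ Finset.Icc (m + 1) K, (1 : ℝ) / j =
            ((m : ℝ) + 1) * ∑ j ∈ Finset.Icc (m + 2) K, (1 : ℝ) / j + 1 := by
          rw [hIcc, Finset.sum_insert (by simp)]
          have : ((m : ℝ) + 1) ≠ 0 := by positivity
          field_simp
          push_cast
          ring
        rw [h2]
        have := hGsum S'
        push_cast at hih ⊢
        linarith
      have h3 : ∑ i ∈ S', G i ≤ ((m : ℝ) + 1) * G a := by
        have := Finset.sum_le_card_nsmul S' G (G a) (fun i _ => hGmax i)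
        rw [hcard'] at this
        have h4 : (m + 1) • G a = ((m : ℝ) + 1) * G a := by
          rw [nsmul_eq_mul]; push_cast; ring
        linarith [h4 ▸ this]
      have hsplit : ∑ i ∈ S, G i = (∑ i ∈ S', G i) - G a := by
        rw [hS', Finset.sum_insert haS]; ring
      rw [hsplit]
      set X := ∑ i ∈ S', G i
      set H := ∑ j ∈ Finset.Icc (m + 1) K, (1 : ℝ) / j
      have hmnn : (0 : ℝ) ≤ (m : ℝ) := by positivity
      nlinarith [mul_le_mul_of_nonneg_left h1 hmnn]

/-- Harmonic sub-invariant for the tracking rule: under the argmin-deficit tracking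
rule, every undershoot `Σ_{s≤t} w_s^k − N_t^k` is bounded by the partial harmonic
sum `Σ_{j=2}^K 1/j`, which is itself at most `ln K`. -/
theorem tracking_harmonic_bound {K : ℕ} (hK : 0 < K)
    (w : ℕ → Fin K → ℝ) (hw : ∀ s, w s ∈ stdSimplex ℝ (Fin K))
    (k : ℕ → Fin K)
    (N : ℕ → Fin K → ℕ)
    (hN : ∀ t i, N t i = ((Finset.range t).filter (fun s => k s = i)).card)
    (hsel : ∀ t, ∀ j : Fin K,
      (N t (k t) : ℝ) - ∑ s ∈ Finset.range (t + 1), w s (k t) ≤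
        (N t j : ℝ) - ∑ s ∈ Finset.range (t + 1), w s j) :
    (∀ t, ∀ i : Fin K,
      (∑ s ∈ Finset.range t, w s i) - (N t i : ℝ) ≤ ∑ j ∈ Finset.Icc 2 K, (1 : ℝ) / j) ∧
    (∑ j ∈ Finset.Icc 2 K, (1 : ℝ) / j ≤ Real.log K) := by
  constructor
  · intro t i
    have h := tracking_subset_invariant w hw k N hN hsel t {i}
    simpa using h
  · exact harmonic_tail_le_log K
end

section
/- From a k-learner regret bound to a saddle-point lower bound: suppose gains g_t(w̃) = (Σ_j w_t^j Δ_ε^j) Σ_k w̃^k d(μ^k,λ_t^k)/Δ_ε^k with w_t^k ∝ w̃_t^k/Δ_ε^k, λ_t a best response in Λ to w_t, and Σ_{t=1}^n g_t(w̃_t) ≥ max_k Σ_{t=1}^n (Σ_j w_t^j Δ_ε^j) d(μ^k,λ_t^k)/Δ_ε^k − B. If additionally Σ_{t=1}^n inf_{λ∈Λ} Σ_k w_t^k d(μ^k,λ^k) ≤ L, then R_n^ε · D_ε ≤ L + B, where R_n^ε = Σ_{t=1}^n Σ_k w_t^k Δ_ε^k and D_ε = inf_{q∈Δ(Λ)}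 max_k E_{λ∼q}[d(μ^k,λ^k)]/Δ_ε^k. -/
/-!
In round `t` the factor `c_t = ∑ i, w_t^i Δ^i` turns the learner's gain into the value
`∑ k, w_t^k d(μ^k, λ_t^k)` of the best response `λ_t`, so the total gain is at most `L`, and the
regret bound says that against the sequence `λ_t` every arm `j` collects
`∑ t, c_t d(μ^j, λ_t^j) / Δ^j ≤ L + B`. The mixture of the Dirac masses at the `λ_t` with weights
`c_t / R_n` is then an alternative distribution witnessing `D_ε ≤ (L + B) / R_n`.
-/

open MeasureTheory

section DiracMixture

variable {ι α : Type*} [MeasurableSpace α] (s : Finset ι) (p : ι → ℝ) (x : ι → α)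

theorem isProbabilityMeasure_sum_smul_dirac (hp : ∀ i ∈ s, 0 ≤ p i) (hp1 : ∑ i ∈ s, p i = 1) :
    IsProbabilityMeasure (∑ i ∈ s, ENNReal.ofReal (p i) • Measure.dirac (x i)) := by
  constructor
  simp [Measure.finsetSum_apply, ← ENNReal.ofReal_sum_of_nonneg hp, hp1]

theorem integral_sum_smul_dirac [MeasurableSingletonClass α] (hp : ∀ i ∈ s, 0 ≤ p i)
    (f : α → ℝ) :
    ∫ a, f a ∂(∑ i ∈ s, ENNReal.ofReal (p i) • Measure.dirac (x i)) = ∑ i ∈ s, p i * f (x i) := by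
  rw [integral_finsetSum_measure fun i _ =>
    (integrable_dirac enorm_lt_top).smul_measure ENNReal.ofReal_ne_top]
  refine Finset.sum_congr rfl fun i hi => ?_
  rw [integral_smul_measure, integral_dirac, ENNReal.toReal_ofReal (hp i hi), smul_eq_mul]

end DiracMixture

theorem mul_iInf_iSup_integral_div_le {ι κ Λ : Type*} [Fintype ι] [MeasurableSpace Λ]
    [MeasurableSingletonClass Λ] (d : κ → Λ → ℝ) (hd : ∀ j l, 0 ≤ d j l) (Δ : κ → ℝ)
    (hΔ : ∀ j, 0 ≤ Δ j) (c : ι → ℝ) (hc : ∀ t, 0 ≤ c t) (lam : ι → Λ) {M : ℝ} (hM : 0 ≤ M)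
    (h : ∀ j, ∑ t, c t * (d j (lam t) / Δ j) ≤ M) :
    (∑ t, c t) * ⨅ q : ProbabilityMeasure Λ, ⨆ j, (∫ l, d j l ∂(q : Measure Λ)) / Δ j ≤ M := by
  set R := ∑ t, c t
  have hR : 0 ≤ R := Finset.sum_nonneg fun t _ => hc t
  rcases hR.eq_or_lt with hR | hR
  · rw [← hR, zero_mul]
    exact hM
  have hp : ∀ t ∈ Finset.univ, 0 ≤ c t / R := fun t _ => div_nonneg (hc t) hR.le
  have hp1 : ∑ t, c t / R = 1 := by rw [← Finset.sum_div, div_self hR.ne']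
  let q : ProbabilityMeasure Λ := ⟨_, isProbabilityMeasure_sum_smul_dirac _ _ lam hp hp1⟩
  have hq : ⨆ j, (∫ l, d j l ∂(q : Measure Λ)) / Δ j ≤ M / R := by
    refine Real.iSup_le (fun j => ?_) (div_nonneg hM hR.le)
    calc (∫ l, d j l ∂(q : Measure Λ)) / Δ j = (∑ t, c t * (d j (lam t) / Δ j)) / R := by
          rw [ProbabilityMeasure.coe_mk, integral_sum_smul_dirac _ _ _ hp, Finset.sum_div,
            Finset.sum_div]
          exact Finset.sum_congr rfl fun t _ => by ring
      _ ≤ M / R := div_le_div_of_nonneg_right (h j) hR.le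
  have hbdd : BddBelow (Set.range fun q : ProbabilityMeasure Λ =>
      ⨆ j, (∫ l, d j l ∂(q : Measure Λ)) / Δ j) :=
    ⟨0, Set.forall_mem_range.2 fun q =>
      Real.iSup_nonneg fun j => div_nonneg (integral_nonneg (hd j)) (hΔ j)⟩
  calc R * ⨅ q : ProbabilityMeasure Λ, ⨆ j, (∫ l, d j l ∂(q : Measure Λ)) / Δ j
      ≤ R * (M / R) := mul_le_mul_of_nonneg_left ((ciInf_le hbdd q).trans hq) hR.le
    _ = M := mul_div_cancel₀ _ hR.ne'

theorem sum_mul_mul_sum_mul_div_eq {ι : Type*} [Fintype ι] {v Δ w : ι → ℝ}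
    (hΔ : ∀ k, Δ k ≠ 0) (hv : ∑ k, v k = 1) (hw : ∀ k, w k = v k / Δ k / ∑ j, v j / Δ j)
    (x : ι → ℝ) : (∑ k, w k * Δ k) * ∑ k, v k * (x k / Δ k) = ∑ k, w k * x k := by
  have hwΔ : ∑ k, w k * Δ k = 1 / ∑ j, v j / Δ j := by
    simp only [hw, ← hv, Finset.sum_div]
    exact Finset.sum_congr rfl fun k _ => by field_simp [hΔ k]
  rw [hwΔ, Finset.mul_sum]
  exact Finset.sum_congr rfl fun k _ => by rw [hw]; ring

theorem k_learner_regret_to_saddle_point_general {K n : ℕ}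
    {Λ : Type*} [MeasurableSpace Λ] [MeasurableSingletonClass Λ]
    (d : Fin K → Λ → ℝ) (hd : ∀ k l, 0 ≤ d k l)
    (Δ : Fin K → ℝ) (hΔ : ∀ k, 0 < Δ k)
    (wt : Fin n → Fin K → ℝ) (hwt : ∀ t, wt t ∈ stdSimplex ℝ (Fin K))
    (w : Fin n → Fin K → ℝ)
    (hw : ∀ t k, w t k = (wt t k / Δ k) / ∑ j, wt t j / Δ j)
    (lam : Fin n → Λ)
    (hbr : ∀ t, ∀ l : Λ, ∑ k, w t k * d k (lam t) ≤ ∑ k, w t k * d k l)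
    (B L : ℝ) (hB : 0 ≤ B) (hL : 0 ≤ L)
    (hreg : ∀ j : Fin K,
      ∑ t, (∑ i, w t i * Δ i) * (d j (lam t) / Δ j) ≤
        (∑ t, (∑ i, w t i * Δ i) * ∑ k, wt t k * (d k (lam t) / Δ k)) + B)
    (hinfo : ∑ t, ⨅ l : Λ, ∑ k, w t k * d k l ≤ L) :
    (∑ t, ∑ k, w t k * Δ k) *
        (⨅ q : ProbabilityMeasure Λ, ⨆ j : Fin K,
          (∫ l, d j l ∂(q : Measure Λ)) / Δ j) ≤ L + B := by
  have hgain : ∀ t, (∑ i, w t i * Δ i) * ∑ k, wt t k * (d k (lam t) / Δ k) =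
      ∑ k, w t k * d k (lam t) := fun t =>
    sum_mul_mul_sum_mul_div_eq (fun k => (hΔ k).ne') (hwt t).2 (hw t) _
  have hgains : ∑ t, (∑ i, w t i * Δ i) * ∑ k, wt t k * (d k (lam t) / Δ k) ≤ L := by
    refine le_trans (Finset.sum_le_sum fun t _ => ?_) hinfo
    have : Nonempty Λ := ⟨lam t⟩
    exact (hgain t).trans_le (le_ciInf (hbr t))
  have hw_nonneg : ∀ t k, 0 ≤ w t k := fun t k => by
    rw [hw]
    exact div_nonneg (div_nonneg ((hwt t).1 k) (hΔ k).le)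
      (Finset.sum_nonneg fun j _ => div_nonneg ((hwt t).1 j) (hΔ j).le)
  exact mul_iInf_iSup_integral_div_le d hd Δ (fun j => (hΔ j).le) _
    (fun t => Finset.sum_nonneg fun i _ => mul_nonneg (hw_nonneg t i) (hΔ i).le) lam
    (add_nonneg hL hB) fun j => (hreg j).trans (by linarith)

/-- From a `k`-learner regret bound to a saddle-point lower bound: if the learner's
gains are within `B` of the best fixed arm and the accumulated information is at most
`L`, then the perturbed regret `R_n^ε` satisfies `R_n^ε · D_ε ≤ L + B`. -/
theorem k_learner_regret_to_saddle_point {K n : ℕ} [Nonempty (Fin K)]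
    {Λ : Type*} [MeasurableSpace Λ] [MeasurableSingletonClass Λ] [Nonempty Λ]
    (d : Fin K → Λ → ℝ) (hmeas : ∀ k, Measurable (d k)) (hd : ∀ k l, 0 ≤ d k l)
    (Δ : Fin K → ℝ) (hΔ : ∀ k, 0 < Δ k)
    (wt : Fin n → Fin K → ℝ) (hwt : ∀ t, wt t ∈ stdSimplex ℝ (Fin K))
    (w : Fin n → Fin K → ℝ)
    (hw : ∀ t k, w t k = (wt t k / Δ k) / ∑ j, wt t j / Δ j)
    (lam : Fin n → Λ)
    (hbr : ∀ t, ∀ l : Λ, ∑ k, w t k * d k (lam t) ≤ ∑ k, w t k * d k l)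
    (B L : ℝ) (hB : 0 ≤ B) (hL : 0 ≤ L)
    (hreg : ∀ j : Fin K,
      ∑ t, (∑ i, w t i * Δ i) * (d j (lam t) / Δ j) ≤
        (∑ t, (∑ i, w t i * Δ i) * ∑ k, wt t k * (d k (lam t) / Δ k)) + B)
    (hinfo : ∑ t, ⨅ l : Λ, ∑ k, w t k * d k l ≤ L) :
    (∑ t, ∑ k, w t k * Δ k) *
        (⨅ q : ProbabilityMeasure Λ, ⨆ j : Fin K,
          (∫ l, d j l ∂(q : Measure Λ)) / Δ j) ≤ L + B :=
  k_learner_regret_to_saddle_point_general d hd Δ hΔ wt hwt w hw lam hbr B L hB hL hreg hinfo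
end
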